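/- Let K = F₂(X) be the field of rational functions in one variable over the field with two elements, and define the equivalence relation ~₃ on K* by t ~₃ t' iff there exist x ∈ K* and y ∈ K with t'x² + y² + t = 0. Then every f ∈ K* satisfies f ~₃ 1 or f ~₃ X, and 1 ≁₃ X; consequently K*/~₃ has exactly two classes, those of 1 and of X. -/
import Mathlib


/-- Multiplication of the 2-dimensional algebra `S(p,q,a,b,c,d)` on `K × K`,
with basis `e = (1,0)`, `f = (0,1)` and table
`e*e = f`, `f*f = p•e + q•f`, `e*f = a•e + b•f`, `f*e = c•e + d•f`. -/
def mulS {K : Type*} [Field K] (p q a b c d : K) (u v : K × K) : K × K :=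
  (u.1 * v.2 * a + u.2 * v.1 * c + u.2 * v.2 * p,
   u.1 * v.1 + u.1 * v.2 * b + u.2 * v.1 * d + u.2 * v.2 * q)

/-- `S(p,q,a,b,c,d)` is endo-commutative: `(x*x)*(y*y) = (x*y)*(x*y)`. -/
def EndoComm {K : Type*} [Field K] (p q a b c d : K) : Prop :=
  ∀ u v : K × K,
    mulS p q a b c d (mulS p q a b c d u u) (mulS p q a b c d v v) =
      mulS p q a b c d (mulS p q a b c d u v) (mulS p q a b c d u v)

/-- `S(p,q,a,b,c,d)` and `S(p',q',a',b',c',d')` are isomorphic: there is a bijective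
`K`-linear map between them preserving multiplication. -/
def IsoS {K : Type*} [Field K] (p q a b c d p' q' a' b' c' d' : K) : Prop :=
  ∃ φ : (K × K) ≃ₗ[K] (K × K),
    ∀ u v : K × K,
      φ (mulS p q a b c d u v) = mulS p' q' a' b' c' d' (φ u) (φ v)

/-- The relation `~₃` on `K*` for `char K = 2`: `t ~₃ t'` iff there exist `x ∈ K*`
and `y ∈ K` such that `t'x² + y² + t = 0`. -/
def rel3F (t t' : RatFunc (ZMod 2)) : Prop :=
  ∃ x : RatFunc (ZMod 2), x ≠ 0 ∧ ∃ y : RatFunc (ZMod 2), t' * x ^ 2 + y ^ 2 + t = 0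

/-- Every polynomial over `F₂` is of the form `a² + X b²` (Frobenius decomposition). -/
lemma poly_decomp_aux (p : Polynomial (ZMod 2)) :
    ∃ a b : Polynomial (ZMod 2), p = a ^ 2 + Polynomial.X * b ^ 2 := by
  induction p using Polynomial.induction_on' with
  | add p q hp hq =>
    obtain ⟨a, b, rfl⟩ := hp
    obtain ⟨a', b', rfl⟩ := hq
    refine ⟨a + a', b + b', ?_⟩
    rw [add_pow_char, add_pow_char]
    ring
  | monomial n c =>
    have hc : c ^ 2 = c := by revert c; decide
    rcases Nat.even_or_odd n with ⟨m, hm⟩ | ⟨m, hm⟩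
    · refine ⟨Polynomial.C c * Polynomial.X ^ m, 0, ?_⟩
      rw [← Polynomial.C_mul_X_pow_eq_monomial]
      rw [mul_pow, ← Polynomial.C_pow, hc, ← pow_mul, hm]
      ring
    · refine ⟨0, Polynomial.C c * Polynomial.X ^ m, ?_⟩
      rw [← Polynomial.C_mul_X_pow_eq_monomial]
      rw [mul_pow, ← Polynomial.C_pow, hc, ← pow_mul, hm]
      ring

/-- Every rational function over `F₂` is of the form `A² + X B²`. -/
lemma rat_decomp_aux (f : RatFunc (ZMod 2)) :
    ∃ A B : RatFunc (ZMod 2), f = A ^ 2 + RatFunc.X * B ^ 2 := by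
  obtain ⟨a, b, hab⟩ := poly_decomp_aux (f.num * f.denom)
  set φ := algebraMap (Polynomial (ZMod 2)) (RatFunc (ZMod 2)) with hφ
  have hd : φ f.denom ≠ 0 := RatFunc.algebraMap_ne_zero (RatFunc.denom_ne_zero f)
  have hfd := div_mul_cancel₀ (φ f.num) hd
  rw [RatFunc.num_div_denom] at hfd
  refine ⟨φ a / φ f.denom, φ b / φ f.denom, ?_⟩
  have h2 : f * (φ f.denom) ^ 2 = φ a ^ 2 + RatFunc.X * φ b ^ 2 := by
    have h3 : f * (φ f.denom) ^ 2 = φ (f.num * f.denom) := by rw [map_mul, ← hfd]; ring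
    rw [h3, hab, map_add, map_pow, map_mul, map_pow, RatFunc.algebraMap_X]
  have h4 : (φ a / φ f.denom) ^ 2 + RatFunc.X * (φ b / φ f.denom) ^ 2
      = (φ a ^ 2 + RatFunc.X * φ b ^ 2) / (φ f.denom) ^ 2 := by
    field_simp
  rw [h4, ← h2, mul_div_assoc, div_self (pow_ne_zero 2 hd), mul_one]

/-- `X` is not a square in `F₂(X)`. -/
lemma X_not_square_aux (g : RatFunc (ZMod 2)) : g ^ 2 ≠ RatFunc.X := by
  intro h
  have hg : g ≠ 0 := by
    intro h0
    rw [h0] at h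
    exact RatFunc.X_ne_zero (by simpa using h.symm)
  have hn : g.num ≠ 0 := RatFunc.num_ne_zero hg
  have hd : g.denom ≠ 0 := RatFunc.denom_ne_zero g
  set φ := algebraMap (Polynomial (ZMod 2)) (RatFunc (ZMod 2)) with hφ
  have hdd : φ g.denom ≠ 0 := RatFunc.algebraMap_ne_zero hd
  have hfd := div_mul_cancel₀ (φ g.num) hdd
  rw [RatFunc.num_div_denom] at hfd
  have key : Polynomial.X * g.denom ^ 2 = g.num ^ 2 := by
    apply RatFunc.algebraMap_injective (ZMod 2)
    rw [map_mul, map_pow, map_pow, RatFunc.algebraMap_X, ← h, ← mul_pow, hfd]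
  have h1 : (Polynomial.X * g.denom ^ 2).natDegree = 1 + 2 * g.denom.natDegree := by
    rw [Polynomial.natDegree_mul Polynomial.X_ne_zero (pow_ne_zero 2 hd),
      Polynomial.natDegree_pow, Polynomial.natDegree_X]
  have h2 : (g.num ^ 2).natDegree = 2 * g.num.natDegree := by
    rw [Polynomial.natDegree_pow]
  rw [key, h2] at h1
  omega

theorem rel3_ratfunc_two_classes :
    (∀ f : RatFunc (ZMod 2), f ≠ 0 →
       rel3F f 1 ∨ rel3F f (RatFunc.X : RatFunc (ZMod 2))) ∧
    ¬ rel3F (1 : RatFunc (ZMod 2)) (RatFunc.X : RatFunc (ZMod 2)) := by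
  haveI : CharP (RatFunc (ZMod 2)) 2 :=
    charP_of_injective_algebraMap (RatFunc.algebraMap_injective (ZMod 2)) 2
  have htwo : (2 : RatFunc (ZMod 2)) = 0 := by
    have := CharP.cast_eq_zero (RatFunc (ZMod 2)) 2
    exact_mod_cast this
  constructor
  · intro f hf
    obtain ⟨A, B, hAB⟩ := rat_decomp_aux f
    by_cases hB : B = 0
    · have hA : A ≠ 0 := by
        intro h0
        apply hf
        rw [hAB, h0, hB]
        ring
      refine Or.inl ⟨A, hA, 0, ?_⟩
      rw [hAB, hB]
      linear_combination htwo * A ^ 2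
    · refine Or.inr ⟨B, hB, A, ?_⟩
      rw [hAB]
      linear_combination htwo * (A ^ 2 + RatFunc.X * B ^ 2)
  · rintro ⟨x, hx, y, hxy⟩
    apply X_not_square_aux ((y + 1) / x)
    rw [div_pow, div_eq_iff (pow_ne_zero 2 hx)]
    linear_combination (-1 : RatFunc (ZMod 2)) * hxy + htwo * (y ^ 2 + y + 1)
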